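/- Let T_1 and T_2 be clique trees of a connected chordal claw-free graph G. Then T_1 = T_2, i.e., the clique tree of a connected chordal claw-free graph is unique. -/

import Mathlib

open SimpleGraph

/-- A graph is *chordal* if every cycle of length at least 4 has a chord, i.e. an
edge of the graph joining two vertices of the cycle that is not an edge of the cycle. -/
def IsChordal {V : Type*} (G : SimpleGraph V) : Prop :=
  ∀ (v : V) (c : G.Walk v v), c.IsCycle → 4 ≤ c.length →
    ∃ u w : V, u ∈ c.support ∧ w ∈ c.support ∧ G.Adj u w ∧ s(u, w) ∉ c.edges

/-- A graph is *claw-free* if it has no induced subgraph isomorphic to the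
complete bipartite graph `K_{1,3}`. -/
def ClawFree {V : Type*} (G : SimpleGraph V) : Prop :=
  IsEmpty (completeBipartiteGraph (Fin 1) (Fin 3) ↪g G)

/-- A *max clique* of `G` is a maximal clique. -/
def IsMaximalClique {V : Type*} (G : SimpleGraph V) (s : Set V) : Prop :=
  G.IsClique s ∧ ∀ t : Set V, G.IsClique t → s ⊆ t → s = t

/-- The type of max cliques of `G`. -/
abbrev MaxClique {V : Type*} (G : SimpleGraph V) : Type _ :=
  {s : Set V // IsMaximalClique G s}

/-- `M_v`: the set of max cliques of `G` containing the vertex `v`. -/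
def cliquesOf {V : Type*} (G : SimpleGraph V) (v : V) : Set (MaxClique G) :=
  {A | v ∈ A.1}

/-- A *clique tree* of `G`: a tree whose vertices are the max cliques of `G` such
that for every vertex `v` of `G` the subgraph induced by `M_v` is connected. -/
structure IsCliqueTree {V : Type*} (G : SimpleGraph V)
    (T : SimpleGraph (MaxClique G)) : Prop where
  isTree : T.IsTree
  induced_connected : ∀ v : V, (T.induce (cliquesOf G v)).Connected

/-- The subgraph of `T` induced by `S` is a path in `T`: there is a path of `T`
whose vertices are exactly `S` and whose edges are exactly the edges of `T`
between vertices of `S`. -/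
def InducedPath {M : Type*} (T : SimpleGraph M) (S : Set M) : Prop :=
  ∃ (a b : M) (p : T.Walk a b), p.IsPath ∧ (∀ A, A ∈ p.support ↔ A ∈ S) ∧
    ∀ A B, A ∈ S → B ∈ S → (T.Adj A B ↔ s(A, B) ∈ p.edges)

/-- `B` is a *star clique*: every vertex of `B` is contained in at most one
neighbor of `B` in the clique tree `T`. -/
def IsStarClique {V : Type*} (G : SimpleGraph V) (T : SimpleGraph (MaxClique G))
    (B : MaxClique G) : Prop :=
  ∀ v ∈ B.1, ∀ A A' : MaxClique G, T.Adj B A → T.Adj B A' →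
    v ∈ A.1 → v ∈ A'.1 → A = A'

/-- `B` is a *fork clique*: `B` has degree 3 in the clique tree `T`, for every
vertex `v ∈ B` there are two distinct neighbors `A, A'` of `B` with
`M_v = {B, A, A'}`, and for all distinct neighbors `A, A'` of `B` there is a
vertex `v` with `M_v = {B, A, A'}`. -/
def IsForkClique {V : Type*} (G : SimpleGraph V) (T : SimpleGraph (MaxClique G))
    (B : MaxClique G) : Prop :=
  (T.neighborSet B).ncard = 3 ∧
  (∀ v ∈ B.1, ∃ A A' : MaxClique G, A ≠ A' ∧ T.Adj B A ∧ T.Adj B A' ∧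
      cliquesOf G v = {B, A, A'}) ∧
  ∀ A A' : MaxClique G, T.Adj B A → T.Adj B A' → A ≠ A' →
      ∃ v : V, cliquesOf G v = {B, A, A'}

/-- The paths `T[S₁]` and `T[S₂]` *fork in `A`*: there is a fork
`(A', A, {A_P, A_Q})`, i.e. `A', A, A_P` are consecutive vertices of the path
`T[S₁]`, `A', A, A_Q` are consecutive vertices of the path `T[S₂]`,
`A_P` does not occur in `T[S₂]` and `A_Q` does not occur in `T[S₁]`. -/
def ForkAt {M : Type*} (T : SimpleGraph M) (S₁ S₂ : Set M) (A : M) : Prop :=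
  ∃ A' AP AQ : M, A' ∈ S₁ ∧ A' ∈ S₂ ∧ A ∈ S₁ ∧ A ∈ S₂ ∧ AP ∈ S₁ ∧ AQ ∈ S₂ ∧
    T.Adj A' A ∧ T.Adj A AP ∧ T.Adj A AQ ∧ A' ≠ AP ∧ A' ≠ AQ ∧ AP ∉ S₂ ∧ AQ ∉ S₁

/-- `A₁, A₂, A₃` form a *fork triangle* around `B`. -/
def FormsForkTriangle {V : Type*} (G : SimpleGraph V) (T : SimpleGraph (MaxClique G))
    (A₁ A₂ A₃ B : MaxClique G) : Prop :=
  A₁ ≠ A₂ ∧ A₁ ≠ A₃ ∧ A₂ ≠ A₃ ∧ T.Adj B A₁ ∧ T.Adj B A₂ ∧ T.Adj B A₃ ∧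
  (∃ u : V, cliquesOf G u = {A₁, B, A₂}) ∧
  (∃ v : V, cliquesOf G v = {A₂, B, A₃}) ∧
  (∃ w : V, cliquesOf G w = {A₃, B, A₁})

/-- `B` has a fork triangle. -/
def HasForkTriangle {V : Type*} (G : SimpleGraph V) (T : SimpleGraph (MaxClique G))
    (B : MaxClique G) : Prop :=
  ∃ A₁ A₂ A₃ : MaxClique G, FormsForkTriangle G T A₁ A₂ A₃ B

/-- In the tree `T` rooted at `R`, `B` is an ancestor of `A` (equivalently, `A` is
a descendant of `B`): `B` lies on the unique path from `R` to `A`.  Every vertex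
is an ancestor/descendant of itself. -/
def IsAncestor {M : Type*} (T : SimpleGraph M) (R A B : M) : Prop :=
  ∀ p : T.Walk R A, p.IsPath → B ∈ p.support

/-- In the tree `T` rooted at `R`, `A` is a child of `P`. -/
def IsChildOf {M : Type*} (T : SimpleGraph M) (R A P : M) : Prop :=
  T.Adj P A ∧ IsAncestor T R A P

/-- `R` is a leaf of `T`: it has exactly one neighbor. -/
def IsLeaf {M : Type*} (T : SimpleGraph M) (R : M) : Prop :=
  (T.neighborSet R).ncard = 1

/-- The triple `(v₁, v₂, v₃)` *spans* the max clique `A`: `A` is the only max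
clique of `G` containing `v₁`, `v₂` and `v₃`. -/
def Spans {V : Type*} (G : SimpleGraph V) (v₁ v₂ v₃ : V) (A : Set V) : Prop :=
  IsMaximalClique G A ∧ v₁ ∈ A ∧ v₂ ∈ A ∧ v₃ ∈ A ∧
    ∀ B : Set V, IsMaximalClique G B → v₁ ∈ B → v₂ ∈ B → v₃ ∈ B → B = A

section CliqueTreeUniqueAux

open SimpleGraph

variable {V : Type*} [Fintype V] {G : SimpleGraph V}

private lemma exists_maxClique_superset (s : Set V) (hs : G.IsClique s) :
    ∃ A : MaxClique G, s ⊆ A.1 := by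
  obtain ⟨t, ⟨ht, hst⟩, hmax⟩ := Set.Finite.exists_maximalFor id
    {t : Set V | G.IsClique t ∧ s ⊆ t} (Set.toFinite _) ⟨s, hs, subset_rfl⟩
  exact ⟨⟨t, ht, fun u hu htu => Set.Subset.antisymm htu (hmax ⟨hu, hst.trans htu⟩ htu)⟩, hst⟩

private lemma exists_nonneighbor (A : MaxClique G) {x : V} (hx : x ∉ A.1) :
    ∃ y ∈ A.1, ¬ G.Adj x y := by
  by_contra h
  push_neg at h
  have hcl : G.IsClique (insert x A.1) := A.2.1.insert fun b hb _ => h b hb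
  have := A.2.2 _ hcl (Set.subset_insert _ _)
  exact hx (this ▸ Set.mem_insert x A.1)

/-- In an acyclic graph, the support of a path is contained in the support of
any walk with the same endpoints. -/
private lemma tree_path_support_subset {M : Type*} {T : SimpleGraph M}
    (hT : T.IsAcyclic) {x y : M} {p : T.Walk x y} (hp : p.IsPath) (q : T.Walk x y) :
    p.support ⊆ q.support := by
  classical
  have h1 : (⟨p, hp⟩ : T.Path x y) = q.toPath := hT.path_unique _ _
  intro c hc
  apply q.support_toPath_subset
  have h2 : p.support = (q.toPath : T.Walk x y).support := by rw [← h1]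
  exact h2 ▸ hc

/-- Every max clique on a path between two max cliques containing `v` also
contains `v`. -/
private lemma mem_of_mem_path {T : SimpleGraph (MaxClique G)}
    (hT : IsCliqueTree G T) {v : V} {A B : MaxClique G}
    (hA : v ∈ A.1) (hB : v ∈ B.1) {p : T.Walk A B} (hp : p.IsPath) :
    ∀ C ∈ p.support, v ∈ C.1 := by
  obtain ⟨w0⟩ := (hT.induced_connected v) ⟨A, hA⟩ ⟨B, hB⟩
  have hw : ∀ C ∈ (w0.map (SimpleGraph.Embedding.induce (cliquesOf G v)).toHom).support,
      v ∈ C.1 := by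
    intro C hC
    rw [SimpleGraph.Walk.support_map, List.mem_map] at hC
    obtain ⟨⟨C', hC'⟩, _, rfl⟩ := hC
    exact hC'
  intro C hC
  exact hw _ (tree_path_support_subset hT.isTree.IsAcyclic hp _ hC)

/-- If `A ~ B` in a tree and some path from `C` to `A` avoids `B`, then every
path from `C` to `B` passes through `A`. -/
private lemma tree_through {M : Type*} {T : SimpleGraph M} (hT : T.IsAcyclic)
    {A B C : M} (hAB : T.Adj A B) {p : T.Walk C A} (hp : p.IsPath)
    (hB : B ∉ p.support) {q : T.Walk C B} (hq : q.IsPath) : A ∈ q.support := by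
  have hpath : (p.append (Walk.cons hAB Walk.nil)).IsPath := by
    rw [Walk.isPath_def, Walk.support_append]
    simp only [Walk.support_cons, Walk.support_nil, List.tail_cons]
    rw [List.nodup_append]
    refine ⟨hp.support_nodup, List.nodup_singleton _, ?_⟩
    simp only [List.mem_singleton]
    rintro a ha b rfl rfl
    exact hB ha
  exact tree_path_support_subset hT hpath q
    (by rw [Walk.mem_support_append_iff]; exact Or.inl p.end_mem_support)

/-- The endpoint of a path does not lie on a proper initial segment. -/
private lemma end_not_mem_takeUntil {M : Type*} {T : SimpleGraph M} [DecidableEq M]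
    {x y z : M} {p : T.Walk x y} (hp : p.IsPath) (hz : z ∈ p.support) (hne : z ≠ y) :
    y ∉ (p.takeUntil z hz).support := by
  intro hy
  have hnd := hp.support_nodup
  rw [← p.take_spec hz, Walk.support_append, List.nodup_append] at hnd
  have hyd : y ∈ (p.dropUntil z hz).support.tail := by
    have h0 : y ∈ (p.dropUntil z hz).support := Walk.end_mem_support _
    rw [Walk.support_eq_cons] at h0
    rcases List.mem_cons.mp h0 with h | h
    · exact absurd h.symm hne
    · exact h
  exact hnd.2.2 y hy y hyd rfl

/-- The start of a path does not lie on a proper final segment. -/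
private lemma start_not_mem_dropUntil {M : Type*} {T : SimpleGraph M} [DecidableEq M]
    {x y z : M} {p : T.Walk x y} (hp : p.IsPath) (hz : z ∈ p.support) (hne : z ≠ x) :
    x ∉ (p.dropUntil z hz).support := by
  intro hx
  have hnd := hp.support_nodup
  rw [← p.take_spec hz, Walk.support_append, List.nodup_append] at hnd
  have hxd : x ∈ (p.dropUntil z hz).support.tail := by
    rw [Walk.support_eq_cons] at hx
    rcases List.mem_cons.mp hx with h | h
    · exact absurd h.symm hne
    · exact h
  exact hnd.2.2 x (Walk.start_mem_support _) x hxd rfl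

/-- Adjacent cliques in a clique tree of a connected graph intersect. -/
private lemma adj_nonempty_inter [Nonempty V] {T : SimpleGraph (MaxClique G)}
    (hT : IsCliqueTree G T) (hconn : G.Connected) {A B : MaxClique G}
    (hAB : T.Adj A B) : ∃ v, v ∈ A.1 ∧ v ∈ B.1 := by
  classical
  by_contra hdisj
  push_neg at hdisj
  -- `Q C` : every path from `C` to `A` avoids `B` (i.e. `C` is on the `A` side)
  set Q : MaxClique G → Prop := fun C => ∀ p : T.Walk C A, p.IsPath → B ∉ p.support
    with hQdef
  have hone : ∀ (u : V) (C₁ C₂ : MaxClique G), u ∈ C₁.1 → u ∈ C₂.1 → Q C₁ → Q C₂ := by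
    intro u C₁ C₂ h1 h2 hQ1 p2 hp2 hB2
    obtain ⟨w1⟩ := hT.isTree.isConnected C₁ A
    obtain ⟨p1, hp1⟩ := w1.toPath
    have hB1 : B ∉ p1.support := hQ1 p1 hp1
    obtain ⟨wr⟩ := hT.isTree.isConnected C₁ C₂
    obtain ⟨r, hr⟩ := wr.toPath
    have hur := mem_of_mem_path hT h1 h2 hr
    have hBr : B ∈ r.support := by
      have hs := tree_path_support_subset hT.isTree.IsAcyclic hp2.reverse
        (p1.reverse.append r)
      have hB2' : B ∈ p2.reverse.support := by
        rwa [Walk.support_reverse, List.mem_reverse]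
      have hmem := hs hB2'
      rw [Walk.mem_support_append_iff] at hmem
      rcases hmem with h | h
      · rw [Walk.support_reverse, List.mem_reverse] at h; exact absurd h hB1
      · exact h
    have hAr : A ∈ r.support := by
      have hq2p : (p2.takeUntil B hB2).IsPath := hp2.takeUntil hB2
      have hAq2 : A ∉ (p2.takeUntil B hB2).support :=
        end_not_mem_takeUntil hp2 hB2 hAB.ne'
      have hAbp : A ∈ (r.append (p2.takeUntil B hB2)).bypass.support :=
        tree_through hT.isTree.IsAcyclic hAB hp1 hB1 (Walk.bypass_isPath _)
      have hmem := (r.append (p2.takeUntil B hB2)).support_bypass_subset hAbp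
      rw [Walk.mem_support_append_iff] at hmem
      rcases hmem with h | h
      · exact h
      · exact absurd h hAq2
    exact hdisj u (hur A hAr) (hur B hBr)
  have hQA : Q A := by
    intro p hp hBp
    cases p with
    | nil => simp only [Walk.support_nil, List.mem_singleton] at hBp; exact hAB.ne' hBp
    | cons h p' =>
      rw [Walk.isPath_def, Walk.support_cons] at hp
      exact (List.nodup_cons.mp hp).1 p'.end_mem_support
  have hR : ∀ (x y : V), G.Adj x y → (∃ C, x ∈ C.1 ∧ Q C) → (∃ C, y ∈ C.1 ∧ Q C) := by
    rintro x y hxy ⟨C, hxC, hQC⟩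
    have hpair : G.IsClique {x, y} := by
      rw [isClique_pair]; exact fun _ => hxy
    obtain ⟨E, hE⟩ := exists_maxClique_superset {x, y} hpair
    exact ⟨E, hE (by simp), hone x C E hxC (hE (by simp)) hQC⟩
  have hwalk : ∀ (x y : V), G.Walk x y → (∃ C, x ∈ C.1 ∧ Q C) → (∃ C, y ∈ C.1 ∧ Q C) := by
    intro x y w
    induction w with
    | nil => exact id
    | cons h _ ih => exact fun hx => ih (hR _ _ h hx)
  have hAnonempty : A.1.Nonempty := by
    rcases Set.eq_empty_or_nonempty A.1 with h | h
    · obtain ⟨v⟩ := ‹Nonempty V›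
      have := A.2.2 {v} (G.isClique_singleton v) (h ▸ Set.empty_subset _)
      exact ⟨v, this ▸ rfl⟩
    · exact h
  have hBnonempty : B.1.Nonempty := by
    rcases Set.eq_empty_or_nonempty B.1 with h | h
    · obtain ⟨v⟩ := ‹Nonempty V›
      have := B.2.2 {v} (G.isClique_singleton v) (h ▸ Set.empty_subset _)
      exact ⟨v, this ▸ rfl⟩
    · exact h
  obtain ⟨a, haA⟩ := hAnonempty
  obtain ⟨b, hbB⟩ := hBnonempty
  obtain ⟨w⟩ := hconn a b
  obtain ⟨C, hbC, hQC⟩ := hwalk a b w ⟨A, haA, hQA⟩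
  have hQB : Q B := hone b C B hbC hbB hQC
  obtain ⟨wBA⟩ := hT.isTree.isConnected B A
  obtain ⟨pBA, hpBA⟩ := wBA.toPath
  exact hQB pBA hpBA pBA.start_mem_support

/-- Build a claw embedding from a center and three pairwise nonadjacent neighbors. -/
private def claw_embedding {c a b d : V} (hca : G.Adj c a) (hcb : G.Adj c b)
    (hcd : G.Adj c d) (hab : ¬G.Adj a b) (had : ¬G.Adj a d) (hbd : ¬G.Adj b d)
    (hab' : a ≠ b) (had' : a ≠ d) (hbd' : b ≠ d) :
    completeBipartiteGraph (Fin 1) (Fin 3) ↪g G := by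
  have key : ∀ i : Fin 3, G.Adj c (![a, b, d] i) := by
    intro i; fin_cases i <;> simpa
  have hba : ¬ G.Adj b a := fun h => hab h.symm
  have hda : ¬ G.Adj d a := fun h => had h.symm
  have hdb : ¬ G.Adj d b := fun h => hbd h.symm
  have key2 : ∀ i j : Fin 3, i ≠ j → ¬ G.Adj (![a, b, d] i) (![a, b, d] j) := by
    intro i j hij
    fin_cases i <;> fin_cases j <;> simp_all
  have key3 : ∀ i j : Fin 3, ![a, b, d] i = ![a, b, d] j → i = j := by
    intro i j hij
    fin_cases i <;> fin_cases j <;> simp_all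
  have key4 : ∀ i : Fin 3, c ≠ ![a, b, d] i := by
    intro i
    fin_cases i
    · exact hca.ne
    · exact hcb.ne
    · exact hcd.ne
  refine ⟨⟨Sum.elim (fun _ => c) (fun i => ![a, b, d] i), ?_⟩, ?_⟩
  · rintro (x | x) (y | y) h <;> simp only [Sum.elim_inl, Sum.elim_inr] at h
    · exact congrArg Sum.inl (Subsingleton.elim x y)
    · exact absurd h (key4 y)
    · exact absurd h.symm (key4 x)
    · exact congrArg Sum.inr (key3 x y h)
  · intro x y
    rcases x with x | x <;> rcases y with y | y
    · exact iff_of_false (G.irrefl) (by simp)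
    · exact iff_of_true (key y) (by simp)
    · exact iff_of_true (key x).symm (by simp)
    · refine iff_of_false ?_ (by simp)
      by_cases hxy : x = y
      · subst hxy; exact G.irrefl
      · exact key2 x y hxy

end CliqueTreeUniqueAux


section CliqueTreeUniqueAux2

open SimpleGraph

variable {V : Type*} [Fintype V] [Nonempty V] {G : SimpleGraph V}

/-- Key lemma: in a clique tree of a connected claw-free graph, a clique `A`
cannot have two distinct neighbors `B, D` with `A ∩ B ⊆ D`. -/
private lemma no_third_neighbor {T : SimpleGraph (MaxClique G)}
    (hT : IsCliqueTree G T) (hconn : G.Connected) (hcf : ClawFree G)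
    {A B D : MaxClique G} (hAB : T.Adj A B) (hAD : T.Adj A D) (hBD : B ≠ D)
    (hsub : ∀ u, u ∈ A.1 → u ∈ B.1 → u ∈ D.1) : False := by
  classical
  obtain ⟨v, hvA, hvB⟩ := adj_nonempty_inter hT hconn hAB
  have hvD : v ∈ D.1 := hsub v hvA hvB
  have hAnD : ¬ A.1 ⊆ D.1 := fun h => hAD.ne (Subtype.ext (A.2.2 D.1 D.2.1 h))
  obtain ⟨x1, hx1A, hx1D⟩ := Set.not_subset.mp hAnD
  have hx1B : x1 ∉ B.1 := fun h => hx1D (hsub x1 hx1A h)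
  obtain ⟨x2, hx2B, hx12⟩ := exists_nonneighbor B hx1B
  obtain ⟨x3, hx3D, hx13⟩ := exists_nonneighbor D hx1D
  have hx2A : x2 ∉ A.1 := fun h => hx12 (A.2.1 hx1A h fun he => hx1B (he ▸ hx2B))
  have hx3A : x3 ∉ A.1 := fun h => hx13 (A.2.1 hx1A h fun he => hx1D (he ▸ hx3D))
  by_cases hclaw : ∃ y2 y3 : V, y2 ∈ B.1 ∧ y3 ∈ D.1 ∧ ¬G.Adj x1 y2 ∧ ¬G.Adj x1 y3 ∧
      ¬G.Adj y2 y3 ∧ y2 ≠ y3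
  · obtain ⟨y2, y3, hy2B, hy3D, h12, h13, h23, hne23⟩ := hclaw
    have hy2A : y2 ∉ A.1 := fun h => h12 (A.2.1 hx1A h fun he => hx1B (he ▸ hy2B))
    have hy3A : y3 ∉ A.1 := fun h => h13 (A.2.1 hx1A h fun he => hx1D (he ▸ hy3D))
    have hv1 : G.Adj v x1 := A.2.1 hvA hx1A fun he => hx1D (he ▸ hvD)
    have hv2 : G.Adj v y2 := B.2.1 hvB hy2B fun he => hy2A (he ▸ hvA)
    have hv3 : G.Adj v y3 := D.2.1 hvD hy3D fun he => hy3A (he ▸ hvA)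
    have hne12 : x1 ≠ y2 := fun he => hx1B (he ▸ hy2B)
    have hne13 : x1 ≠ y3 := fun he => hx1D (he ▸ hy3D)
    exact hcf.elim (claw_embedding hv1 hv2 hv3 h12 h13 h23 hne12 hne13 hne23)
  · push_neg at hclaw
    set S : Set V := {y | (y ∈ B.1 ∨ y ∈ D.1) ∧ ¬G.Adj x1 y} with hSdef
    have hv1 : G.Adj v x1 := A.2.1 hvA hx1A fun he => hx1D (he ▸ hvD)
    have hvS : ∀ y ∈ S, v ≠ y := by
      rintro y ⟨_, hy⟩ rfl
      exact hy hv1.symm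
    have hSclique : G.IsClique (insert v S) := by
      intro a ha b hb hne
      rcases ha with rfl | ⟨haBD, ha1⟩
      · rcases hb with rfl | ⟨hbBD, hb1⟩
        · exact absurd rfl hne
        · rcases hbBD with h | h
          · exact B.2.1 hvB h hne
          · exact D.2.1 hvD h hne
      · rcases hb with rfl | ⟨hbBD, hb1⟩
        · rcases haBD with h | h
          · exact (B.2.1 hvB h hne.symm).symm
          · exact (D.2.1 hvD h hne.symm).symm
        · rcases haBD with h | h <;> rcases hbBD with h' | h'
          · exact B.2.1 h h' hne
          · by_contra hadj
            exact hne (hclaw a b h h' ha1 hb1 hadj)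
          · by_contra hadj
            exact hne (hclaw b a h' h hb1 ha1 fun hx => hadj hx.symm).symm
          · exact D.2.1 h h' hne
    obtain ⟨E, hSE⟩ := exists_maxClique_superset _ hSclique
    have hx2E : x2 ∈ E.1 := hSE (Set.mem_insert_of_mem _ ⟨Or.inl hx2B, hx12⟩)
    have hx3E : x3 ∈ E.1 := hSE (Set.mem_insert_of_mem _ ⟨Or.inr hx3D, hx13⟩)
    have hpBAD : (Walk.cons hAB.symm (Walk.cons hAD Walk.nil)).IsPath := by
      rw [Walk.isPath_def]
      simp [hAB.ne', hBD, hAD.ne]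
    obtain ⟨wEB⟩ := hT.isTree.isConnected E B
    obtain ⟨pEB, hpEB⟩ := wEB.toPath
    obtain ⟨wED⟩ := hT.isTree.isConnected E D
    obtain ⟨pED, hpED⟩ := wED.toPath
    have hsub2 := tree_path_support_subset hT.isTree.IsAcyclic hpBAD
      (pEB.reverse.append pED)
    have hAin : A ∈ (pEB.reverse.append pED).support := hsub2 (by simp)
    rw [Walk.mem_support_append_iff] at hAin
    rcases hAin with h | h
    · rw [Walk.support_reverse, List.mem_reverse] at h
      exact hx2A (mem_of_mem_path hT hx2E hx2B hpEB A h)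
    · exact hx3A (mem_of_mem_path hT hx3E hx3D hpED A h)

/-- Characterization of the edges of a clique tree. -/
private lemma adj_iff_char {T : SimpleGraph (MaxClique G)}
    (hT : IsCliqueTree G T) (hconn : G.Connected) (hcf : ClawFree G)
    (A B : MaxClique G) :
    T.Adj A B ↔ (A ≠ B ∧ (∃ v, v ∈ A.1 ∧ v ∈ B.1) ∧
      ∀ C : MaxClique G, (∀ u, u ∈ A.1 → u ∈ B.1 → u ∈ C.1) → C = A ∨ C = B) := by
  classical
  constructor
  · intro hAB
    refine ⟨hAB.ne, adj_nonempty_inter hT hconn hAB, ?_⟩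
    intro C hC
    by_contra hc
    push_neg at hc
    obtain ⟨hCA, hCB⟩ := hc
    obtain ⟨wAC⟩ := hT.isTree.isConnected A C
    obtain ⟨p, hp⟩ := wAC.toPath
    by_cases hBp : B ∈ p.support
    · -- pass to the tail path from B to C
      have hq : (p.dropUntil B hBp).IsPath := hp.dropUntil hBp
      have hAq : A ∉ (p.dropUntil B hBp).support :=
        start_not_mem_dropUntil hp hBp hAB.ne'
      revert hq hAq
      generalize p.dropUntil B hBp = q
      intro hq hAq
      cases q with
      | nil => exact hCB rfl
      | @cons _ D _ h q' =>
        have hDin : D ∈ (Walk.cons h q').support := by simp [q'.start_mem_support]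
        have hDA : D ≠ A := fun he => hAq (he ▸ hDin)
        refine no_third_neighbor hT hconn hcf hAB.symm h hDA.symm ?_
        intro u huB huA
        exact mem_of_mem_path hT huB (hC u huA huB) hq D hDin
    · cases p with
      | nil => exact hCA rfl
      | @cons _ D _ h p' =>
        have hDin : D ∈ (Walk.cons h p').support := by simp [p'.start_mem_support]
        have hDB : B ≠ D := fun he => hBp (he ▸ hDin)
        refine no_third_neighbor hT hconn hcf hAB h hDB ?_
        intro u huA huB
        exact mem_of_mem_path hT huA (hC u huA huB) hp D hDin
  · rintro ⟨hne, ⟨v, hvA, hvB⟩, hthird⟩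
    obtain ⟨wAB⟩ := hT.isTree.isConnected A B
    obtain ⟨p, hp⟩ := wAB.toPath
    have hmem : ∀ C ∈ p.support, C = A ∨ C = B := fun C hCp =>
      hthird C fun u huA huB => mem_of_mem_path hT huA huB hp C hCp
    cases p with
    | nil => exact absurd rfl hne
    | @cons _ D _ h p' =>
      rcases hmem D (by simp [p'.start_mem_support]) with h1 | h1
      · exact absurd h1 h.ne'
      · exact h1 ▸ h

end CliqueTreeUniqueAux2


/-- The clique tree of a connected chordal claw-free graph is
unique: if `T₁` and `T₂` are clique trees of `G`, then `T₁ = T₂`. -/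
theorem cliqueTree_unique {V : Type*} [Fintype V] [Nonempty V]
    (G : SimpleGraph V) (hconn : G.Connected) (hch : IsChordal G)
    (hcf : ClawFree G) (T₁ T₂ : SimpleGraph (MaxClique G))
    (hT₁ : IsCliqueTree G T₁) (hT₂ : IsCliqueTree G T₂) :
    T₁ = T₂ := by
  ext A B
  rw [adj_iff_char hT₁ hconn hcf, adj_iff_char hT₂ hconn hcf]
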